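/- arXiv:2508.05844 — 3 statements merged into one kernel-verified Lean document; each statement's English description precedes it below -/
import Mathlib

section
/- For all p, q in the interval [1/4, 3/4], the Kullback–Leibler divergence between the Bernoulli distribution with parameter p and the Bernoulli distribution with parameter q is at most 8(p−q)². -/
open Real

/-- KL divergence between Bernoulli(p) and Bernoulli(q). -/
noncomputable def bernoulliKL (p q : ℝ) : ℝ :=
  p * Real.log (p / q) + (1 - p) * Real.log ((1 - p) / (1 - q))

theorem bernoulli_kl_le (p q : ℝ)
    (hp : p ∈ Set.Icc (1/4 : ℝ) (3/4)) (hq : q ∈ Set.Icc (1/4 : ℝ) (3/4)) :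
    bernoulliKL p q ≤ 8 * (p - q) ^ 2 := by
  obtain ⟨hp1, hp2⟩ := hp
  obtain ⟨hq1, hq2⟩ := hq
  have hq0 : (0:ℝ) < q := by linarith
  have hq1' : (0:ℝ) < 1 - q := by linarith
  have hp0 : (0:ℝ) < p := by linarith
  have hp1' : (0:ℝ) < 1 - p := by linarith
  have l1 : Real.log (p / q) ≤ p / q - 1 :=
    Real.log_le_sub_one_of_pos (by positivity)
  have l2 : Real.log ((1 - p) / (1 - q)) ≤ (1 - p) / (1 - q) - 1 :=
    Real.log_le_sub_one_of_pos (by positivity)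
  have step : bernoulliKL p q ≤ p * (p / q - 1) + (1 - p) * ((1 - p) / (1 - q) - 1) := by
    unfold bernoulliKL
    gcongr
  have eq1 : p * (p / q - 1) + (1 - p) * ((1 - p) / (1 - q) - 1) = (p - q) ^ 2 / (q * (1 - q)) := by
    field_simp
    ring
  rw [eq1] at step
  refine step.trans ?_
  rw [div_le_iff₀ (by positivity)]
  nlinarith [sq_nonneg (p - q), mul_nonneg (show (0:ℝ) ≤ q - 1/4 by linarith) (show (0:ℝ) ≤ 3/4 - q by linarith), mul_nonneg (mul_nonneg (show (0:ℝ) ≤ q - 1/4 by linarith) (show (0:ℝ) ≤ 3/4 - q by linarith)) (sq_nonneg (p - q))]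
end

section
/- Let F : [0,1] → [0,1] be α-strongly concave and differentiable on [ε, 1] for some ε ∈ (0,1) and α > 0, and M-Lipschitz on [ε, 1]. Let m_inf > 0, let m, m̃ ∈ [m_inf, 2]^K be vectors of coefficients, and for any vector c define Φ_c(x) = Σ_k c_k F(x_k) on the simplex Δ_K. Suppose x⋆ maximizes Φ_m over Δ_K ∩ [ε,1]^K, ũ maximizes Φ_{m̃} over Δ_K ∩ [ε,1]^K, and ⟨∇Φ_m(x⋆), u − x⋆⟩ ≤ 0 for all u ∈ Δ_K ∩ [ε,1]^K. Then Φ_m(x⋆) − Φ_m(ũ) ≤ (2M²/(m_inf·α))·‖m − m̃‖₂². -/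
open Real Finset

theorem stability_value (K : ℕ) (F F' : ℝ → ℝ) (ε α M m_inf : ℝ)
    (hε : ε ∈ Set.Ioo (0:ℝ) 1) (hα : 0 < α) (hM : 0 ≤ M) (hminf : 0 < m_inf)
    (hderiv : ∀ u ∈ Set.Icc ε 1, HasDerivAt F (F' u) u)
    (hconc : ∀ u ∈ Set.Icc ε 1, ∀ v ∈ Set.Icc ε 1,
        F v ≤ F u + F' u * (v - u) - α / 2 * (v - u) ^ 2)
    (hlip : ∀ u ∈ Set.Icc ε 1, ∀ v ∈ Set.Icc ε 1, |F u - F v| ≤ M * |u - v|)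
    (m mt : Fin K → ℝ)
    (hm : ∀ k, m k ∈ Set.Icc m_inf 2) (hmt : ∀ k, mt k ∈ Set.Icc m_inf 2)
    (D : Set (Fin K → ℝ))
    (hD : D = {x : Fin K → ℝ | (∀ k, x k ∈ Set.Icc ε 1) ∧ ∑ k, x k = 1})
    (xs ut : Fin K → ℝ) (hxs : xs ∈ D) (hut : ut ∈ D)
    (hxs_max : ∀ x ∈ D, ∑ k, m k * F (x k) ≤ ∑ k, m k * F (xs k))
    (hut_max : ∀ x ∈ D, ∑ k, mt k * F (x k) ≤ ∑ k, mt k * F (ut k))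
    (hgrad : ∀ u ∈ D, ∑ k, m k * F' (xs k) * (u k - xs k) ≤ 0) :
    (∑ k, m k * F (xs k)) - (∑ k, m k * F (ut k))
      ≤ 2 * M ^ 2 / (m_inf * α) * ∑ k, (m k - mt k) ^ 2 := by
  have hxs' := hxs
  have hut' := hut
  rw [hD] at hxs' hut'
  obtain ⟨hxsI, hxsS⟩ := hxs'
  obtain ⟨hutI, hutS⟩ := hut'
  set d := (∑ k, m k * F (xs k)) - (∑ k, m k * F (ut k)) with hdd
  set s2 := ∑ k, (ut k - xs k) ^ 2 with hs2
  set δ2 := ∑ k, (m k - mt k) ^ 2 with hδ2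
  clear_value d s2 δ2
  have hδ2nn : 0 ≤ δ2 := hδ2 ▸ Finset.sum_nonneg fun k _ => sq_nonneg _
  have hs2nn : 0 ≤ s2 := hs2 ▸ Finset.sum_nonneg fun k _ => sq_nonneg _
  have hRHSnn : 0 ≤ 2 * M ^ 2 / (m_inf * α) * δ2 := by positivity
  -- Step A : strong concavity + first-order optimality
  have hA : m_inf * α / 2 * s2 ≤ d := by
    have h1 : ∀ k : Fin K, m k * F (ut k) ≤
        m k * F (xs k) + m k * F' (xs k) * (ut k - xs k)
          - α / 2 * (m_inf * (ut k - xs k) ^ 2) := by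
      intro k
      have hc := hconc (xs k) (hxsI k) (ut k) (hutI k)
      have hmk : m_inf ≤ m k := (hm k).1
      have hmk0 : 0 ≤ m k := le_trans hminf.le hmk
      nlinarith [mul_le_mul_of_nonneg_left hc hmk0, sq_nonneg (ut k - xs k),
        mul_le_mul_of_nonneg_right hmk (sq_nonneg (ut k - xs k))]
    have hsum : ∑ k, m k * F (ut k) ≤
        ∑ k, (m k * F (xs k) + m k * F' (xs k) * (ut k - xs k)
          - α / 2 * (m_inf * (ut k - xs k) ^ 2)) :=
      Finset.sum_le_sum fun k _ => h1 k
    have hg := hgrad ut hut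
    rw [Finset.sum_sub_distrib, Finset.sum_add_distrib, ← Finset.mul_sum,
      ← Finset.mul_sum] at hsum
    rw [hdd, hs2]; nlinarith [hsum, hg]
  -- Step B : difference bound
  have hB : d ≤ ∑ k, |m k - mt k| * (M * |xs k - ut k|) := by
    have h := hut_max xs hxs
    have hkey : d - ∑ k, (m k - mt k) * (F (xs k) - F (ut k))
        = (∑ k, mt k * F (xs k)) - ∑ k, mt k * F (ut k) := by
      rw [hdd]
      rw [← Finset.sum_sub_distrib, ← Finset.sum_sub_distrib, ← Finset.sum_sub_distrib]
      exact Finset.sum_congr rfl fun k _ => by ring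
    have h2 : d ≤ ∑ k, (m k - mt k) * (F (xs k) - F (ut k)) := by linarith
    refine h2.trans (Finset.sum_le_sum fun k _ => ?_)
    calc (m k - mt k) * (F (xs k) - F (ut k))
        ≤ |m k - mt k| * |F (xs k) - F (ut k)| := by
          rw [← abs_mul]; exact le_abs_self _
      _ ≤ |m k - mt k| * (M * |xs k - ut k|) :=
          mul_le_mul_of_nonneg_left (hlip (xs k) (hxsI k) (ut k) (hutI k)) (abs_nonneg _)
  -- Cauchy–Schwarz
  have hCS : (∑ k, |m k - mt k| * |xs k - ut k|) ^ 2 ≤ δ2 * s2 := by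
    have hsq := Finset.sum_mul_sq_le_sq_mul_sq Finset.univ
      (fun k => |m k - mt k|) (fun k => |xs k - ut k|)
    calc (∑ k, |m k - mt k| * |xs k - ut k|) ^ 2
        ≤ (∑ k, |m k - mt k| ^ 2) * ∑ k, |xs k - ut k| ^ 2 := hsq
      _ = δ2 * s2 := by
          rw [hδ2, hs2]
          congr 1
          · exact Finset.sum_congr rfl fun k _ => sq_abs _
          · exact Finset.sum_congr rfl fun k _ => by rw [sq_abs]; ring_nf
  have hB' : d ≤ M * ∑ k, |m k - mt k| * |xs k - ut k| := by
    rw [Finset.mul_sum]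
    refine hB.trans (le_of_eq (Finset.sum_congr rfl fun k _ => by ring))
  have hSnn : 0 ≤ ∑ k, |m k - mt k| * |xs k - ut k| :=
    Finset.sum_nonneg fun k _ => mul_nonneg (abs_nonneg _) (abs_nonneg _)
  rcases le_or_gt d 0 with hd0 | hd0
  · exact hd0.trans hRHSnn
  · have hd2 : d ^ 2 ≤ M ^ 2 * (δ2 * s2) := by
      calc d ^ 2 ≤ (M * ∑ k, |m k - mt k| * |xs k - ut k|) ^ 2 := by
            apply pow_le_pow_left₀ hd0.le hB'
        _ = M ^ 2 * (∑ k, |m k - mt k| * |xs k - ut k|) ^ 2 := by ring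
        _ ≤ M ^ 2 * (δ2 * s2) := mul_le_mul_of_nonneg_left hCS (sq_nonneg _)
    rw [div_mul_eq_mul_div, le_div_iff₀ (by positivity)]
    have h1 : M ^ 2 * δ2 * (m_inf * α / 2 * s2) ≤ M ^ 2 * δ2 * d :=
      mul_le_mul_of_nonneg_left hA (mul_nonneg (sq_nonneg M) hδ2nn)
    have h2 : d ^ 2 * (m_inf * α / 2) ≤ M ^ 2 * (δ2 * s2) * (m_inf * α / 2) :=
      mul_le_mul_of_nonneg_right hd2 (by positivity)
    have key : d * (m_inf * α) * d ≤ 2 * M ^ 2 * δ2 * d := by nlinarith [h1, h2]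
    exact le_of_mul_le_mul_right key hd0
end

section
/- Under the hypotheses of the stability lemma (Φ_m, Φ_{m̃} defined via an α-strongly concave, M-Lipschitz F on [ε,1], with m, m̃ ∈ [m_inf,2]^K, maximizers x⋆ of Φ_m and ũ of Φ_{m̃} over Δ_K ∩ [ε,1]^K, and ⟨∇Φ_m(x⋆), ũ − x⋆⟩ ≤ 0), the distance between the maximizers satisfies ‖x⋆ − ũ‖₂ ≤ (2M/(m_inf·α))·‖m − m̃‖₂. -/
open Real Finset

theorem stability_maximizers (K : ℕ) (F F' : ℝ → ℝ) (ε α M m_inf : ℝ)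
    (hε : ε ∈ Set.Ioo (0:ℝ) 1) (hα : 0 < α) (hM : 0 ≤ M) (hminf : 0 < m_inf)
    (hderiv : ∀ u ∈ Set.Icc ε 1, HasDerivAt F (F' u) u)
    (hconc : ∀ u ∈ Set.Icc ε 1, ∀ v ∈ Set.Icc ε 1,
        F v ≤ F u + F' u * (v - u) - α / 2 * (v - u) ^ 2)
    (hlip : ∀ u ∈ Set.Icc ε 1, ∀ v ∈ Set.Icc ε 1, |F u - F v| ≤ M * |u - v|)
    (m mt : Fin K → ℝ)
    (hm : ∀ k, m k ∈ Set.Icc m_inf 2) (hmt : ∀ k, mt k ∈ Set.Icc m_inf 2)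
    (D : Set (Fin K → ℝ))
    (hD : D = {x : Fin K → ℝ | (∀ k, x k ∈ Set.Icc ε 1) ∧ ∑ k, x k = 1})
    (xs ut : Fin K → ℝ) (hxs : xs ∈ D) (hut : ut ∈ D)
    (hxs_max : ∀ x ∈ D, ∑ k, m k * F (x k) ≤ ∑ k, m k * F (xs k))
    (hut_max : ∀ x ∈ D, ∑ k, mt k * F (x k) ≤ ∑ k, mt k * F (ut k))
    (hgrad : ∑ k, m k * F' (xs k) * (ut k - xs k) ≤ 0) :
    Real.sqrt (∑ k, (xs k - ut k) ^ 2)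
      ≤ 2 * M / (m_inf * α) * Real.sqrt (∑ k, (m k - mt k) ^ 2) := by
  subst hD
  obtain ⟨hxs1, _⟩ := hxs
  obtain ⟨hut1, _⟩ := hut
  set S := ∑ k, (xs k - ut k) ^ 2 with hS
  set T := ∑ k, (m k - mt k) ^ 2 with hT
  have hS0 : 0 ≤ S := Finset.sum_nonneg fun k _ => sq_nonneg _
  have hT0 : 0 ≤ T := Finset.sum_nonneg fun k _ => sq_nonneg _
  -- Step 1: strong concavity bound
  have step1 : m_inf * α / 2 * S ≤ (∑ k, m k * F (xs k)) - ∑ k, m k * F (ut k) := by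
    have h1 : ∀ k, m k * F (ut k) ≤ m k * F (xs k) + m k * (F' (xs k) * (ut k - xs k))
        - m k * (α / 2 * (ut k - xs k) ^ 2) := by
      intro k
      have := hconc (xs k) (hxs1 k) (ut k) (hut1 k)
      have hmk := (hm k).1
      nlinarith [hminf.le.trans hmk]
    have hsum := Finset.sum_le_sum (s := Finset.univ) (fun k _ => h1 k)
    simp only [Finset.sum_sub_distrib, Finset.sum_add_distrib] at hsum
    have h2 : ∑ k, m_inf * (α / 2 * (xs k - ut k) ^ 2)
        ≤ ∑ k, m k * (α / 2 * (ut k - xs k) ^ 2) := by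
      apply Finset.sum_le_sum
      intro k _
      have hmk := (hm k).1
      have heq : (xs k - ut k) ^ 2 = (ut k - xs k) ^ 2 := by ring
      rw [heq]
      exact mul_le_mul_of_nonneg_right hmk (by positivity)
    have h3 : ∑ k, m k * (F' (xs k) * (ut k - xs k)) ≤ 0 := by
      calc ∑ k, m k * (F' (xs k) * (ut k - xs k))
          = ∑ k, m k * F' (xs k) * (ut k - xs k) := by
            apply Finset.sum_congr rfl; intro k _; ring
        _ ≤ 0 := hgrad
    have h4 : ∑ k, m_inf * (α / 2 * (xs k - ut k) ^ 2) = m_inf * α / 2 * S := by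
      rw [hS, Finset.mul_sum]
      apply Finset.sum_congr rfl; intro k _; ring
    linarith
  -- Step 2: Lipschitz / Cauchy-Schwarz bound
  have step2 : (∑ k, m k * F (xs k)) - (∑ k, m k * F (ut k))
      ≤ M * (Real.sqrt T * Real.sqrt S) := by
    have hA : (∑ k, m k * F (xs k)) - (∑ k, m k * F (ut k))
        = (∑ k, (m k - mt k) * (F (xs k) - F (ut k)))
          + ((∑ k, mt k * F (xs k)) - ∑ k, mt k * F (ut k)) := by
      rw [← Finset.sum_sub_distrib, ← Finset.sum_sub_distrib, ← Finset.sum_add_distrib]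
      apply Finset.sum_congr rfl; intro k _; ring
    have hB : (∑ k, mt k * F (xs k)) - (∑ k, mt k * F (ut k)) ≤ 0 := by
      have := hut_max xs ⟨hxs1, ‹∑ k, xs k = 1›⟩
      linarith
    have hC : (∑ k, (m k - mt k) * (F (xs k) - F (ut k)))
        ≤ M * ∑ k, |m k - mt k| * |xs k - ut k| := by
      rw [Finset.mul_sum]
      apply Finset.sum_le_sum
      intro k _
      have hl := hlip (xs k) (hxs1 k) (ut k) (hut1 k)
      calc (m k - mt k) * (F (xs k) - F (ut k))
          ≤ |m k - mt k| * |F (xs k) - F (ut k)| := by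
            rw [← abs_mul]; exact le_abs_self _
        _ ≤ |m k - mt k| * (M * |xs k - ut k|) :=
            mul_le_mul_of_nonneg_left hl (abs_nonneg _)
        _ = M * (|m k - mt k| * |xs k - ut k|) := by ring
    have hCS : (∑ k, |m k - mt k| * |xs k - ut k|) ≤ Real.sqrt T * Real.sqrt S := by
      have h := Finset.sum_mul_sq_le_sq_mul_sq Finset.univ
        (fun k => |m k - mt k|) (fun k => |xs k - ut k|)
      simp only [sq_abs] at h
      have h2 := Real.sqrt_le_sqrt h
      rw [Real.sqrt_sq (Finset.sum_nonneg fun k _ => mul_nonneg (abs_nonneg _) (abs_nonneg _)),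
        Real.sqrt_mul hT0] at h2
      exact h2
    have hM2 : M * (∑ k, |m k - mt k| * |xs k - ut k|) ≤ M * (Real.sqrt T * Real.sqrt S) :=
      mul_le_mul_of_nonneg_left hCS hM
    linarith
  -- combine
  have key : m_inf * α / 2 * S ≤ M * (Real.sqrt T * Real.sqrt S) := le_trans step1 step2
  set s := Real.sqrt S with hs
  set t := Real.sqrt T with ht
  have hs0 : 0 ≤ s := Real.sqrt_nonneg _
  have ht0 : 0 ≤ t := Real.sqrt_nonneg _
  have hSs : S = s ^ 2 := (Real.sq_sqrt hS0).symm
  rw [hSs] at key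
  rcases eq_or_lt_of_le hs0 with h | h
  · rw [← h]
    positivity
  · rw [div_mul_eq_mul_div, le_div_iff₀ (by positivity)]
    nlinarith
end
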